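/- Let $z$ be a real number with $0 < z < 1/2$, and let $N$ be the nearest integer to $1/z$. Write $z = 1/N + z'$. Then $N \geq 2$ and $|z'| < 1/N^2$; moreover for every real number $r$, there is at most one integer $x$ with $|x| < N/2$ for which the inequality $\|r + zx\| \geq \frac{1}{2}\|r + x/N\|$ fails. -/

import Mathlib

/-!
Since `N` is within `1/2` of `1/z`, `z ≤ 2/(2N - 1)` and `|z - 1/N| = z |N - 1/z| / N ≤ 1/(N(2N - 1))`.
If `x` fails the inequality, then `‖r + x/N‖ ≤ ‖r + zx‖ + |z - 1/N| |x|` forces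
`‖r + x/N‖ < 2 |z - 1/N| |x|`. For two distinct failing `x, y` with `|x|, |y| < N/2`, the integer
`x - y` is not divisible by `N`, so
`1/N ≤ ‖(x - y)/N‖ ≤ ‖r + x/N‖ + ‖r + y/N‖ < 2 |z - 1/N| (N - 1) ≤ 1/N`, a contradiction.
-/

/-- Distance from a real number to the nearest integer. -/
noncomputable def nint (x : ℝ) : ℝ := |x - round x|

lemma nint_le_abs_sub_intCast (t : ℝ) (m : ℤ) : nint t ≤ |t - m| := round_le t m

lemma nint_add_le (a b : ℝ) : nint (a + b) ≤ nint a + |b| :=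
  calc nint (a + b) ≤ |a + b - round a| := nint_le_abs_sub_intCast _ _
    _ = |(a - round a) + b| := by ring_nf
    _ ≤ nint a + |b| := abs_add_le _ _

lemma nint_sub_le (a b : ℝ) : nint (a - b) ≤ nint a + nint b :=
  calc nint (a - b) ≤ |a - b - ((round a - round b : ℤ) : ℝ)| := nint_le_abs_sub_intCast _ _
    _ = |(a - round a) - (b - round b)| := by push_cast; ring_nf
    _ ≤ nint a + nint b := abs_sub _ _

lemma nint_lt_two_mul_abs_sub_of_lt {a b : ℝ} (h : nint b < 1 / 2 * nint a) :
    nint a < 2 * |b - a| := by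
  have := nint_add_le b (a - b)
  rw [add_sub_cancel, abs_sub_comm] at this
  linarith

lemma one_div_le_nint_intCast_div {k N : ℤ} (hN : 0 < N) (hk : ¬ N ∣ k) :
    1 / (N : ℝ) ≤ nint (k / N) := by
  set m := round ((k : ℝ) / N)
  have hNR : (0 : ℝ) < N := by exact_mod_cast hN
  have hne : k - m * N ≠ 0 := fun h => hk ⟨m, by linarith⟩
  have hone : (1 : ℝ) ≤ |((k - m * N : ℤ) : ℝ)| := by exact_mod_cast Int.one_le_abs hne
  rw [nint, show (k : ℝ) / N - m = ((k - m * N : ℤ) : ℝ) / N by push_cast; field_simp,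
    abs_div, abs_of_pos hNR]
  gcongr

lemma two_mul_abs_lt_of_abs_lt_half {x N : ℤ} (h : |(x : ℝ)| < N / 2) : 2 * |x| < N := by
  have : ((2 * |x| : ℤ) : ℝ) < N := by push_cast; linarith
  exact_mod_cast this

lemma two_le_of_abs_sub_one_div_le {z : ℝ} {N : ℤ} (hz0 : 0 < z) (hz1 : z < 1 / 2)
    (hN : |(N : ℝ) - 1 / z| ≤ 1 / 2) : 2 ≤ N := by
  have hz : (2 : ℝ) < 1 / z := by rw [lt_div_iff₀ hz0]; linarith
  have : (1 : ℝ) < N := by linarith [(abs_le.mp hN).1]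
  have : (1 : ℤ) < N := by exact_mod_cast this
  omega

lemma abs_sub_one_div_le {z N : ℝ} (hz0 : 0 < z) (hN1 : 1 / 2 < N) (hN : |N - 1 / z| ≤ 1 / 2) :
    |z - 1 / N| ≤ 1 / (N * (2 * N - 1)) := by
  have hNpos : 0 < N := by linarith
  have hz : z * (2 * N - 1) ≤ 2 := by
    have h := mul_le_mul_of_nonneg_left (show N - 1 / 2 ≤ 1 / z by linarith [(abs_le.mp hN).2])
      hz0.le
    rw [mul_one_div_cancel hz0.ne'] at h
    linarith
  calc |z - 1 / N| = z * |N - 1 / z| / N := by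
        rw [show z - 1 / N = z * (N - 1 / z) / N by field_simp, abs_div, abs_mul,
          abs_of_pos hz0, abs_of_pos hNpos]
    _ ≤ z * (1 / 2) / N := by gcongr
    _ ≤ 1 / (N * (2 * N - 1)) := by
        rw [div_le_div_iff₀ hNpos (by nlinarith)]
        nlinarith

lemma eq_of_nint_lt_mul_abs {N : ℤ} {r δ : ℝ} (hδ : 0 ≤ δ) (hδN : δ * (N - 1) ≤ 1 / N)
    {x y : ℤ} (hx : |(x : ℝ)| < N / 2) (hy : |(y : ℝ)| < N / 2)
    (hxr : nint (r + x / N) < δ * |(x : ℝ)|) (hyr : nint (r + y / N) < δ * |(y : ℝ)|) :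
    x = y := by
  by_contra hne
  have hx' := two_mul_abs_lt_of_abs_lt_half hx
  have hy' := two_mul_abs_lt_of_abs_lt_half hy
  have hN : 0 < N := by have := abs_nonneg x; omega
  have hndvd : ¬ N ∣ x - y := fun h =>
    hne (sub_eq_zero.mp (Int.eq_zero_of_abs_lt_dvd h (by linarith [abs_sub x y])))
  have hsum : |(x : ℝ)| + |(y : ℝ)| ≤ N - 1 := by
    have : |x| + |y| ≤ N - 1 := by omega
    exact_mod_cast this
  have := calc 1 / (N : ℝ) ≤ nint ((x - y : ℤ) / N) := one_div_le_nint_intCast_div hN hndvd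
    _ = nint ((r + x / N) - (r + y / N)) := by push_cast; ring_nf
    _ ≤ nint (r + x / N) + nint (r + y / N) := nint_sub_le _ _
    _ < δ * (|(x : ℝ)| + |(y : ℝ)|) := by linarith
    _ ≤ δ * (N - 1) := by gcongr
    _ ≤ 1 / N := hδN
  exact lt_irrefl _ this

/-- Let `0 < z < 1/2` and let `N` be the nearest integer to `1/z`, and write
`z = 1/N + z'`. Then `N ≥ 2`, `|z'| < 1/N²`, and for every real `r` there is at
most one integer `x` with `|x| < N/2` for which `‖r + zx‖ ≥ (1/2)‖r + x/N‖` fails. -/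
theorem stmt_4 (z : ℝ) (hz0 : 0 < z) (hz1 : z < 1 / 2)
    (N : ℤ) (hN : |(N : ℝ) - 1 / z| ≤ 1 / 2) :
    2 ≤ N ∧ |z - 1 / (N : ℝ)| < 1 / (N : ℝ) ^ 2 ∧
      ∀ r : ℝ, ∃ x0 : ℤ, ∀ x : ℤ, |(x : ℝ)| < (N : ℝ) / 2 →
        ¬ ((1 / 2) * nint (r + (x : ℝ) / (N : ℝ)) ≤ nint (r + z * (x : ℝ))) →
        x = x0 := by
  have hN2 : 2 ≤ N := two_le_of_abs_sub_one_div_le hz0 hz1 hN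
  have hNR : (2 : ℝ) ≤ N := by exact_mod_cast hN2
  have hz' := abs_sub_one_div_le hz0 (by linarith) hN
  have hδN : 2 * |z - 1 / N| * ((N : ℝ) - 1) ≤ 1 / N := calc
    _ ≤ 2 * (1 / ((N : ℝ) * (2 * N - 1))) * (N - 1) := by gcongr; linarith
    _ = 2 * (N - 1) / (N * (2 * N - 1)) := by ring
    _ ≤ 1 / N := by
        rw [div_le_div_iff₀ (by nlinarith) (by linarith)]
        nlinarith
  refine ⟨hN2, hz'.trans_lt (one_div_lt_one_div_of_lt (by positivity) (by nlinarith)), fun r => ?_⟩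
  have hfail (x : ℤ) (h : ¬ (1 / 2) * nint (r + x / N) ≤ nint (r + z * x)) :
      nint (r + x / N) < 2 * |z - 1 / N| * |(x : ℝ)| := by
    have h' := nint_lt_two_mul_abs_sub_of_lt (not_le.mp h)
    rwa [show r + z * x - (r + x / N) = (z - 1 / N) * x by ring, abs_mul, ← mul_assoc] at h'
  by_cases hex : ∃ x0 : ℤ, |(x0 : ℝ)| < N / 2 ∧ ¬ (1 / 2) * nint (r + x0 / N) ≤ nint (r + z * x0)
  · obtain ⟨x0, hx0, hfail0⟩ := hex
    exact ⟨x0, fun x hx hfailx =>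
      eq_of_nint_lt_mul_abs (by positivity) hδN hx hx0 (hfail x hfailx) (hfail x0 hfail0)⟩
  · exact ⟨0, fun x hx hfailx => absurd ⟨x, hx, hfailx⟩ hex⟩
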